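/- Let 0 → A → B → C → 0 be a short exact sequence of R-modules. If A and C are u-S-projective, then so is B. -/

import Mathlib

open CategoryTheory

universe u

def IsUSTorsionMod {R : Type u} [CommRing R] (S : Submonoid R) (X : ModuleCat.{u} R) : Prop :=
  ∃ s ∈ S, ∀ x : X, s • x = 0

def IsUSTorsion {R : Type u} [CommRing R] (S : Submonoid R) (T : Type u)
    [AddCommGroup T] [Module R T] : Prop :=
  ∃ s ∈ S, ∀ x : T, s • x = 0

noncomputable def ext (R : Type u) [CommRing R] (n : ℕ) (P M : ModuleCat.{u} R) :
    ModuleCat.{u} R :=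
  ((Ext R (ModuleCat.{u} R) n).obj (Opposite.op P)).obj M

def IsUSProjective {R : Type u} [CommRing R] (S : Submonoid R) (P : Type u)
    [AddCommGroup P] [Module R P] : Prop :=
  ∀ M : ModuleCat.{u} R, IsUSTorsionMod S (ext R 1 (ModuleCat.of R P) M)

def IsUSInjective {R : Type u} [CommRing R] (S : Submonoid R) (E : Type u)
    [AddCommGroup E] [Module R E] : Prop :=
  ∀ M : ModuleCat.{u} R, IsUSTorsionMod S (ext R 1 M (ModuleCat.of R E))

/-!
If `π : F ↠ X` is a projective presentation, `Ext¹(X, M)` is the cokernel of the restriction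
`Hom(F, M) → Hom(ker π, M)`; hence `s` kills it iff `s • φ` extends to `F` for every
`φ : ker π → M`, a condition independent of the presentation. Given presentations `FA ↠ A` and
`FC ↠ C`, lift `FC → C` to `B`: then `FA × FC ↠ B` is a presentation whose kernel `K` sits in
`0 → ker πA → K → ker πC → 0`. For `φ : K → M`, extend `sA • φ|ker πA` to `ψA`; the defect
`sA • φ - ψA ∘ fst` vanishes on `ker πA`, so it factors through `ker πC` and extends after
multiplying by `sC`. Hence `sC * sA` kills `Ext¹(B, M)`.
-/

open LinearMap

namespace LinearMap

section

variable {R M N P : Type*} [CommRing R] [AddCommGroup M] [Module R M] [AddCommGroup N] [Module R N]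
  [AddCommGroup P] [Module R P]

theorem exists_comp_eq_of_surjective_of_ker_le {p : M →ₗ[R] N} (hp : Function.Surjective p)
    {θ : M →ₗ[R] P} (h : ker p ≤ ker θ) : ∃ φ : N →ₗ[R] P, φ ∘ₗ p = θ :=
  ⟨(ker p).liftQ θ h ∘ₗ (p.quotKerEquivOfSurjective hp).symm.toLinearMap, by
    ext x
    have : (p.quotKerEquivOfSurjective hp).symm (p x) = (ker p).mkQ x := by
      rw [LinearEquiv.symm_apply_eq]; rfl
    simp [this]⟩

end

variable {R A B C FA FC : Type*} [CommRing R] [AddCommGroup A] [Module R A] [AddCommGroup B]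
  [Module R B] [AddCommGroup C] [Module R C] [AddCommGroup FA] [Module R FA] [AddCommGroup FC]
  [Module R FC] {f : A →ₗ[R] B} {g : B →ₗ[R] C} {πA : FA →ₗ[R] A} (l : FC →ₗ[R] B)

theorem comap_inl_ker_coprod (hf : Function.Injective f) :
    (ker ((f ∘ₗ πA).coprod l)).comap (inl R FA FC) = ker πA := by
  ext a
  simp [map_eq_zero_iff f hf]

theorem map_snd_ker_coprod (hfg : Function.Exact f g) (hπA : Function.Surjective πA) :
    (ker ((f ∘ₗ πA).coprod l)).map (snd R FA FC) = ker (g ∘ₗ l) := by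
  ext c
  constructor
  · rintro ⟨⟨a, c⟩, h, rfl⟩
    simpa [hfg.apply_apply_eq_zero] using congr(g $h)
  · intro hc
    obtain ⟨a', ha'⟩ := (hfg (l c)).1 hc
    obtain ⟨a, rfl⟩ := hπA a'
    exact ⟨(-a, c), by simp [ha'], rfl⟩

theorem coprod_surjective_of_exact (hfg : Function.Exact f g) (hπA : Function.Surjective πA)
    (hl : Function.Surjective (g ∘ₗ l)) : Function.Surjective ((f ∘ₗ πA).coprod l) := by
  intro b
  obtain ⟨c, hc⟩ := hl (g b)
  obtain ⟨a', ha'⟩ := (hfg (b - l c)).1 (by rw [map_sub, ← comp_apply g l, hc, sub_self])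
  obtain ⟨a, rfl⟩ := hπA a'
  exact ⟨(a, c), by simp [ha']⟩

end LinearMap

namespace Submodule

variable {R F : Type*} [CommRing R] [AddCommGroup F] [Module R F]

def SMulExtends (s : R) (K : Submodule R F) (M : Type*) [AddCommGroup M] [Module R M] : Prop :=
  ∀ φ : K →ₗ[R] M, ∃ ψ : F →ₗ[R] M, ψ ∘ₗ K.subtype = s • φ

variable {F' X M : Type*} [AddCommGroup F'] [Module R F'] [AddCommGroup X] [Module R X]
  [AddCommGroup M] [Module R M]

theorem SMulExtends.ker_of_projective [Module.Projective R F] [Module.Projective R F']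
    {s : R} {π : F →ₗ[R] X} {π' : F' →ₗ[R] X}
    (hπ : Function.Surjective π) (hπ' : Function.Surjective π')
    (h : (ker π).SMulExtends s M) : (ker π').SMulExtends s M := by
  obtain ⟨w, hw⟩ := Module.projective_lifting_property π' π hπ'
  obtain ⟨u, hu⟩ := Module.projective_lifting_property π π' hπ
  have hw_ker : ∀ x ∈ ker π, w x ∈ ker π' := fun x hx => by
    simpa [← hw] using hx
  have hu_ker : ∀ x ∈ ker π', u x ∈ ker π := fun x hx => by
    simpa [← hu] using hx
  have hwu : ∀ x, w (u x) - x ∈ ker π' := fun x => by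
    simp [← LinearMap.comp_apply π' w, hw, ← LinearMap.comp_apply π u, hu]
  intro φ'
  obtain ⟨ψ, hψ⟩ := h (φ' ∘ₗ w.restrict hw_ker)
  refine ⟨ψ ∘ₗ u - s • φ' ∘ₗ (w ∘ₗ u - LinearMap.id).codRestrict _ hwu, ?_⟩
  ext k
  have hψk := congr($hψ ⟨u k, hu_ker k k.2⟩)
  have hδ : (w ∘ₗ u - LinearMap.id).codRestrict _ hwu k =
      w.restrict hw_ker ⟨u k, hu_ker k k.2⟩ - k := by
    ext; simp [LinearMap.restrict_apply]
  simp only [LinearMap.comp_apply, coe_subtype, LinearMap.smul_apply] at hψk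
  simp only [LinearMap.comp_apply, coe_subtype, LinearMap.sub_apply, LinearMap.smul_apply, hψk, hδ,
    map_sub, smul_sub, sub_sub_cancel]

variable {FA FC : Type*} [AddCommGroup FA] [Module R FA] [AddCommGroup FC] [Module R FC]

theorem SMulExtends.of_prod {KA : Submodule R FA} {KC : Submodule R FC}
    {K : Submodule R (FA × FC)} (hKA : K.comap (LinearMap.inl R FA FC) = KA)
    (hKC : K.map (LinearMap.snd R FA FC) = KC) {sA sC : R}
    (hA : KA.SMulExtends sA M) (hC : KC.SMulExtends sC M) : K.SMulExtends (sC * sA) M := by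
  intro φ
  have hinl : ∀ a ∈ KA, LinearMap.inl R FA FC a ∈ K := by
    rw [← hKA]; exact fun a ha => ha
  have hsnd : ∀ x ∈ K, LinearMap.snd R FA FC x ∈ KC := by
    rw [← hKC]; exact fun x hx => mem_map_of_mem hx
  obtain ⟨ψA, hψA⟩ := hA (φ ∘ₗ (LinearMap.inl R FA FC).restrict hinl)
  set θ : K →ₗ[R] M := sA • φ - ψA ∘ₗ LinearMap.fst R FA FC ∘ₗ K.subtype
  have hθ : ker ((LinearMap.snd R FA FC).restrict hsnd) ≤ ker θ := by
    rintro ⟨⟨a, c⟩, hk⟩ hc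
    obtain rfl : c = 0 := congr(Subtype.val $hc)
    have ha : a ∈ KA := by rw [← hKA]; exact hk
    have hψa : ψA a = sA • φ ⟨(a, 0), hk⟩ := congr($hψA ⟨a, ha⟩)
    simp [θ, hψa]
  have hp : Function.Surjective ((LinearMap.snd R FA FC).restrict hsnd) := by
    rintro ⟨c, hc⟩
    rw [← hKC] at hc
    obtain ⟨x, hx, rfl⟩ := hc
    exact ⟨⟨x, hx⟩, rfl⟩
  obtain ⟨φC, hφC⟩ := LinearMap.exists_comp_eq_of_surjective_of_ker_le hp hθ
  obtain ⟨ψC, hψC⟩ := hC φC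
  refine ⟨sC • ψA ∘ₗ LinearMap.fst R FA FC + ψC ∘ₗ LinearMap.snd R FA FC, ?_⟩
  ext k
  have h1 : ψC k.1.2 = sC • φC ((LinearMap.snd R FA FC).restrict hsnd k) :=
    congr($hψC ((LinearMap.snd R FA FC).restrict hsnd k))
  have h2 : φC ((LinearMap.snd R FA FC).restrict hsnd k) = sA • φ k - ψA k.1.1 := congr($hφC k)
  calc sC • ψA k.1.1 + ψC k.1.2 = sC • ψA k.1.1 + sC • (sA • φ k - ψA k.1.1) := by rw [h1, h2]
    _ = (sC * sA) • φ k := by rw [smul_sub, mul_smul]; abel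

variable {Q₁ Q₂ : Type*} [AddCommGroup Q₁] [Module R Q₁] [AddCommGroup Q₂] [Module R Q₂]

theorem smulExtends_range_iff {d : Q₂ →ₗ[R] Q₁} {e : Q₁ →ₗ[R] F} (hde : range d = ker e)
    {s : R} : (range e).SMulExtends s M ↔
      ∀ z : Q₁ →ₗ[R] M, z ∘ₗ d = 0 → ∃ ψ : F →ₗ[R] M, ψ ∘ₗ e = s • z := by
  have he : (range e).subtype ∘ₗ e.rangeRestrict = e := rfl
  refine ⟨fun h z hz => ?_, fun h φ => ?_⟩
  · rw [← range_le_ker_iff, hde, ← ker_rangeRestrict] at hz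
    obtain ⟨φ, rfl⟩ := exists_comp_eq_of_surjective_of_ker_le e.surjective_rangeRestrict hz
    obtain ⟨ψ, hψ⟩ := h φ
    exact ⟨ψ, show (ψ ∘ₗ (range e).subtype) ∘ₗ e.rangeRestrict = _ by rw [hψ, smul_comp]⟩
  · have hφd : (φ ∘ₗ e.rangeRestrict) ∘ₗ d = 0 := by
      rw [← range_le_ker_iff, hde, ← ker_rangeRestrict]
      exact ker_le_ker_comp _ _
    obtain ⟨ψ, hψ⟩ := h _ hφd
    refine ⟨ψ, (cancel_right e.surjective_rangeRestrict).1 ?_⟩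
    rw [comp_assoc, he, hψ, smul_comp]

end Submodule

section

variable {R : Type u} [CommRing R]

theorem IsUSTorsionMod.of_iso {S : Submonoid R} {X Y : ModuleCat.{u} R} (e : X ≅ Y)
    (h : IsUSTorsionMod S X) : IsUSTorsionMod S Y := by
  obtain ⟨s, hs, h⟩ := h
  refine ⟨s, hs, fun y => ?_⟩
  have hy : e.hom (e.inv y) = y := by simp
  rw [← hy, ← map_smul, h, map_zero]

variable (S : Submonoid R)

theorem CategoryTheory.ShortComplex.isUSTorsionMod_homology_iff
    (sc : ShortComplex (ModuleCat.{u} R)) :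
    IsUSTorsionMod S sc.homology ↔ ∃ s ∈ S, ∀ x, sc.g x = 0 → ∃ y, sc.f y = s • x := by
  refine ⟨fun h => ?_, fun h => ?_⟩
  · obtain ⟨s, hs, h⟩ := h.of_iso sc.moduleCatHomologyIso
    refine ⟨s, hs, fun x hx => ?_⟩
    obtain ⟨y, hy⟩ := (Submodule.Quotient.mk_eq_zero _).1 (h (Submodule.Quotient.mk ⟨x, hx⟩))
    exact ⟨y, congr(Subtype.val $hy)⟩
  · obtain ⟨s, hs, h⟩ := h
    refine IsUSTorsionMod.of_iso sc.moduleCatHomologyIso.symm ⟨s, hs, fun x => ?_⟩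
    obtain ⟨⟨x, hx⟩, rfl⟩ := Submodule.Quotient.mk_surjective _ x
    obtain ⟨y, hy⟩ := h x hx
    exact (Submodule.Quotient.mk_eq_zero _).2 ⟨y, Subtype.ext hy⟩

theorem isUSTorsionMod_ext_one_iff {X M : ModuleCat.{u} R} (Q : ProjectiveResolution X) :
    IsUSTorsionMod S (ext R 1 X M) ↔ ∃ s ∈ S, (ker (Q.π.f 0).hom).SMulExtends s M := by
  set sc := (Q.complex.linearYonedaObj R M).sc' 0 1 2
  have e : ext R 1 X M ≅ sc.homology :=
    Q.isoExt 1 M ≪≫ (Q.complex.linearYonedaObj R M).homologyIsoSc' 0 1 2 (by simp) (by simp)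
  have hd : range (Q.complex.d 2 1).hom = ker (Q.complex.d 1 0).hom :=
    ((Q.complex.exactAt_iff' 2 1 0 (by simp) (by simp)).1
      (Q.complex_exactAt_succ 0)).moduleCat_range_eq_ker
  have hπ : range (Q.complex.d 1 0).hom = ker (Q.π.f 0).hom := Q.exact₀.moduleCat_range_eq_ker
  rw [← hπ]
  simp_rw [Submodule.smulExtends_range_iff hd]
  refine ⟨fun h => ?_, fun h => ?_⟩
  · obtain ⟨s, hs, h⟩ := (sc.isUSTorsionMod_homology_iff S).1 (h.of_iso e)
    refine ⟨s, hs, fun z hz => ?_⟩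
    obtain ⟨ψ, hψ⟩ := h (ModuleCat.ofHom z) (ModuleCat.hom_ext hz)
    exact ⟨ψ.hom, congr(ModuleCat.Hom.hom $hψ).trans (ModuleCat.hom_smul _ _)⟩
  · obtain ⟨s, hs, h⟩ := h
    refine ((sc.isUSTorsionMod_homology_iff S).2 ⟨s, hs, fun z hz => ?_⟩).of_iso e.symm
    obtain ⟨ψ, hψ⟩ := h z.hom congr(ModuleCat.Hom.hom $hz)
    exact ⟨ModuleCat.ofHom ψ, ModuleCat.hom_ext (hψ.trans (ModuleCat.hom_smul _ _).symm)⟩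

theorem isUSTorsionMod_ext_one_iff_of_surjective {X F : Type u} [AddCommGroup X] [Module R X]
    [AddCommGroup F] [Module R F] [Module.Projective R F] {π : F →ₗ[R] X}
    (hπ : Function.Surjective π) (M : ModuleCat.{u} R) :
    IsUSTorsionMod S (ext R 1 (ModuleCat.of R X) M) ↔ ∃ s ∈ S, (ker π).SMulExtends s M := by
  obtain ⟨Q⟩ := HasProjectiveResolution.out (Z := ModuleCat.of R X)
  have : Module.Projective R (Q.complex.X 0) := (IsProjective.iff_projective _).2 (Q.projective 0)
  have hQ : Function.Surjective (Q.π.f 0).hom := (ModuleCat.epi_iff_surjective _).1 inferInstance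
  rw [isUSTorsionMod_ext_one_iff S Q]
  exact exists_congr fun s => and_congr_right fun _ =>
    ⟨.ker_of_projective hQ hπ, .ker_of_projective hπ hQ⟩

end

/-- in a short exact sequence `0 → A → B → C → 0`, if `A` and `C` are
`u`-`S`-projective, then so is `B`. -/
theorem uS_projective_two_out_of_three
    {R : Type u} [CommRing R] (S : Submonoid R)
    {A B C : Type u} [AddCommGroup A] [Module R A] [AddCommGroup B] [Module R B]
    [AddCommGroup C] [Module R C]
    (f : A →ₗ[R] B) (g : B →ₗ[R] C)
    (hf : Function.Injective f) (hg : Function.Surjective g)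
    (hfg : LinearMap.range f = LinearMap.ker g)
    (hA : IsUSProjective S A) (hC : IsUSProjective S C) :
    IsUSProjective S B := by
  intro M
  have hπA := Finsupp.linearCombination_id_surjective R A
  have hπC := Finsupp.linearCombination_id_surjective R C
  obtain ⟨sA, hsA, hKA⟩ := (isUSTorsionMod_ext_one_iff_of_surjective S hπA M).1 (hA M)
  obtain ⟨sC, hsC, hKC⟩ := (isUSTorsionMod_ext_one_iff_of_surjective S hπC M).1 (hC M)
  obtain ⟨l, hl⟩ := Module.projective_lifting_property g (Finsupp.linearCombination R id) hg
  have hexact : Function.Exact f g := LinearMap.exact_iff.2 hfg.symm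
  have hπB := coprod_surjective_of_exact l hexact hπA (hl ▸ hπC)
  refine (isUSTorsionMod_ext_one_iff_of_surjective S hπB M).2 ⟨sC * sA, S.mul_mem hsC hsA, ?_⟩
  exact hKA.of_prod (comap_inl_ker_coprod l hf) (hl ▸ map_snd_ker_coprod l hexact hπA) hKC
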